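/- arXiv:0802.0165 — 2 statements merged into one kernel-verified Lean document; each statement's English description precedes it below -/
import Mathlib

section
/- For pairwise distinct points A, B, C on an elliptic curve E, the quantity Γ(A,B,C) = u_{A,B}(C) satisfies the symmetry relations Γ(A,B,C) = u_{B,C}(A) = u_{C,A}(B) = -u_{B,A}(C) - a₁. -/
/-!
Put `P = C - A`, `Q = A - B`, `R = B - C`. These are nonzero and `P + Q + R = 0`, so they are the
three intersections of one line with the curve, and `Γ(A,B,C)`, `u_{B,C}(A)`, `u_{C,A}(B)` are all
the slope of that line. Negation `(x, y) ↦ (x, -y - a₁x - a₃)` maps a line of slope `ℓ` to one of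
slope `-ℓ - a₁`, which gives the last relation.
-/

noncomputable section
namespace EllipticPeriods

variable {F : Type*} [Field F]

/-- x-coordinate of an affine point, with junk value 0 at the point at infinity. -/
def xc {W : WeierstrassCurve.Affine F} : W.Point → F
  | .zero => 0
  | @WeierstrassCurve.Affine.Point.some _ _ _ x _ _ => x

/-- y-coordinate of an affine point, with junk value 0 at the point at infinity. -/
def yc {W : WeierstrassCurve.Affine F} : W.Point → F
  | .zero => 0
  | @WeierstrassCurve.Affine.Point.some _ _ _ _ y _ => y

open Classical in
/-- The function `u_{A,B} = (y_A - y(A-B))/(x_A - x(A-B))`, evaluated at `P`: this is the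
slope of the line (secant, or tangent in the degenerate case) through the points
`P - A` and `A - B` of the curve. -/
def uf (W : WeierstrassCurve.Affine F) (A B P : W.Point) : F :=
  W.slope (xc (P - A)) (xc (A - B)) (yc (P - A)) (yc (A - B))

/-- `Γ(A,B,C) = u_{A,B}(C)`. -/
def Gam (W : WeierstrassCurve.Affine F) (A B C : W.Point) : F := uf W A B C

open WeierstrassCurve.Affine WeierstrassCurve.Affine.Point

section Coordinates

variable {W : WeierstrassCurve.Affine F} [DecidableEq F] {x₁ x₂ y₁ y₂ : F}

lemma slope_swap_of_equation (h₁ : W.Equation x₁ y₁) (h₂ : W.Equation x₂ y₂) :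
    W.slope x₂ x₁ y₂ y₁ = W.slope x₁ x₂ y₁ y₂ := by
  by_cases hx : x₁ = x₂
  · subst hx
    by_cases hy : y₁ = W.negY x₁ y₂
    · rw [slope_of_Y_eq rfl hy, slope_of_Y_eq rfl (by rw [hy, negY_negY])]
    · rw [Y_eq_of_Y_ne h₁ h₂ rfl hy]
  · rw [slope_of_X_ne hx, slope_of_X_ne (Ne.symm hx), ← neg_sub y₁, ← neg_sub x₁, neg_div_neg_eq]

lemma slope_negY_negY (h₁ : W.Equation x₁ y₁) (h₂ : W.Equation x₂ y₂)
    (hxy : ¬(x₁ = x₂ ∧ y₁ = W.negY x₂ y₂)) :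
    W.slope x₁ x₂ (W.negY x₁ y₁) (W.negY x₂ y₂) = -W.slope x₁ x₂ y₁ y₂ - W.a₁ := by
  by_cases hx : x₁ = x₂
  · have hy : y₁ ≠ W.negY x₂ y₂ := fun hy => hxy ⟨hx, hy⟩
    obtain rfl := hx
    obtain rfl := Y_eq_of_Y_ne h₁ h₂ rfl hy
    have hy' : W.negY x₁ y₁ ≠ W.negY x₁ (W.negY x₁ y₁) := by rw [negY_negY]; exact hy.symm
    have hd : y₁ - W.negY x₁ y₁ ≠ 0 := sub_ne_zero.mpr hy
    rw [slope_of_Y_ne rfl hy', slope_of_Y_ne rfl hy, negY_negY, ← neg_sub y₁]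
    field_simp
    simp only [negY]
    ring
  · have hd : x₁ - x₂ ≠ 0 := sub_ne_zero.mpr hx
    rw [slope_of_X_ne hx, slope_of_X_ne hx]
    field_simp
    simp only [negY]
    ring

lemma slope_eq_of_X_ne {ℓ : F} (hx : x₁ ≠ x₂) (hℓ : y₁ - y₂ = ℓ * (x₁ - x₂)) :
    W.slope x₁ x₂ y₁ y₂ = ℓ := by
  rw [slope_of_X_ne hx, hℓ, mul_div_cancel_right₀ _ (sub_ne_zero.mpr hx)]

end Coordinates

section Points

open Classical

def pointSlope (W : WeierstrassCurve.Affine F) (P Q : W.Point) : F :=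
  W.slope (xc P) (xc Q) (yc P) (yc Q)

variable {W : WeierstrassCurve.Affine F} {P Q R : W.Point}

lemma uf_eq_pointSlope (A B P : W.Point) : uf W A B P = pointSlope W (P - A) (A - B) := rfl

lemma pointSlope_swap (hP : P ≠ 0) (hQ : Q ≠ 0) : pointSlope W Q P = pointSlope W P Q := by
  rcases P with _ | @⟨_, _, h₁⟩
  · exact absurd rfl hP
  rcases Q with _ | @⟨_, _, h₂⟩
  · exact absurd rfl hQ
  exact slope_swap_of_equation h₁.left h₂.left

lemma pointSlope_neg_neg (hP : P ≠ 0) (hQ : Q ≠ 0) (hPQ : P + Q ≠ 0) :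
    pointSlope W (-P) (-Q) = -pointSlope W P Q - W.a₁ := by
  rcases P with _ | @⟨_, _, h₁⟩
  · exact absurd rfl hP
  rcases Q with _ | @⟨_, _, h₂⟩
  · exact absurd rfl hQ
  exact slope_negY_negY h₁.left h₂.left fun hxy => hPQ (add_of_Y_eq hxy.1 hxy.2)

lemma eq_of_xc_eq (hP : P ≠ 0) (hQ : Q ≠ 0) (hPQ : P + Q ≠ 0) (hx : xc P = xc Q) : P = Q := by
  rcases P with _ | @⟨_, _, h₁⟩
  · exact absurd rfl hP
  rcases Q with _ | @⟨_, _, h₂⟩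
  · exact absurd rfl hQ
  rcases X_eq_iff.mp hx with h | h
  · exact h
  · exact (hPQ (h ▸ neg_add_cancel _)).elim

/-- `-(P + Q)` is the third point of the curve on the line through `P` and `Q`. -/
lemma yc_neg_add_sub (hP : P ≠ 0) (hQ : Q ≠ 0) (hPQ : P + Q ≠ 0) :
    yc (-(P + Q)) - yc P = pointSlope W P Q * (xc (-(P + Q)) - xc P) := by
  rcases P with _ | @⟨x₁, y₁, h₁⟩
  · exact absurd rfl hP
  rcases Q with _ | @⟨x₂, y₂, h₂⟩
  · exact absurd rfl hQ
  have hxy : ¬(x₁ = x₂ ∧ y₁ = W.negY x₂ y₂) := fun hxy => hPQ (add_of_Y_eq hxy.1 hxy.2)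
  rw [add_some hxy, neg_some]
  simp only [xc, yc, addY, negY_negY, negAddY, pointSlope]
  ring

/-- Two of the three points `P, Q, R` have distinct abscissae unless `P = Q = R`, and the line
through those two is the line through all three. -/
lemma pointSlope_eq_of_add_add_eq_zero (hP : P ≠ 0) (hQ : Q ≠ 0) (hR : R ≠ 0)
    (h : P + Q + R = 0) : pointSlope W Q R = pointSlope W P Q := by
  have hR_eq : R = -(P + Q) := eq_neg_of_add_eq_zero_right h
  have hP_eq : P = -(Q + R) := eq_neg_of_add_eq_zero_left (by rwa [← add_assoc])
  have hPQ : P + Q ≠ 0 := fun h0 => hR (by rw [hR_eq, h0, _root_.neg_zero])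
  have hQR : Q + R ≠ 0 := fun h0 => hP (by rw [hP_eq, h0, _root_.neg_zero])
  by_cases hxPQ : xc P = xc Q
  · obtain rfl := eq_of_xc_eq hP hQ hPQ hxPQ
    by_cases hxPR : xc P = xc R
    · rw [← eq_of_xc_eq hP hR hQR hxPR]
    · refine slope_eq_of_X_ne hxPR ?_
      have hline := yc_neg_add_sub hP hP hPQ
      rw [← hR_eq] at hline
      linear_combination -hline
  · refine (slope_eq_of_X_ne hxPQ ?_).symm
    have hline := yc_neg_add_sub hQ hR hQR
    rwa [← hP_eq] at hline

end Points

/-- symmetry relations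
`Γ(A,B,C) = u_{B,C}(A) = u_{C,A}(B) = -u_{B,A}(C) - a₁` for pairwise distinct `A, B, C`. -/
theorem Gamma_symm {F : Type*} [Field F] (W : WeierstrassCurve.Affine F)
    (A B C : W.Point) (hAB : A ≠ B) (hBC : B ≠ C) (hAC : A ≠ C) :
    Gam W A B C = uf W B C A ∧ Gam W A B C = uf W C A B ∧
      Gam W A B C = -uf W B A C - W.a₁ := by
  classical
  have hP : C - A ≠ 0 := sub_ne_zero.mpr hAC.symm
  have hQ : A - B ≠ 0 := sub_ne_zero.mpr hAB
  have hR : B - C ≠ 0 := sub_ne_zero.mpr hBC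
  have hPQR : C - A + (A - B) + (B - C) = 0 := by abel
  have hQRP : A - B + (B - C) + (C - A) = 0 := by abel
  have hQR : pointSlope W (A - B) (B - C) = pointSlope W (C - A) (A - B) :=
    pointSlope_eq_of_add_add_eq_zero hP hQ hR hPQR
  have hRP : pointSlope W (B - C) (C - A) = pointSlope W (A - B) (B - C) :=
    pointSlope_eq_of_add_add_eq_zero hQ hR hP hQRP
  have hRQ_neg : pointSlope W (C - B) (B - A) = -pointSlope W (B - C) (A - B) - W.a₁ := by
    rw [← neg_sub B C, ← neg_sub A B]
    exact pointSlope_neg_neg hR hQ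
      (by rw [show B - C + (A - B) = -(C - A) by abel]; exact neg_ne_zero.mpr hP)
  simp only [Gam, uf_eq_pointSlope]
  refine ⟨hQR.symm, (hRP.trans hQR).symm, ?_⟩
  rw [hRQ_neg, pointSlope_swap hQ hR, hQR]
  ring

end EllipticPeriods
end
end

section
/- In the setting of an elliptic basis: with Φ the q-Frobenius automorphism of the algebraic closure of 𝔽_q, for k ≢ 0, 1 mod d one has Φ(ω_k) = ω_{k-1} - ω_{-1} + Γ_{-1,k-1}, and furthermore Φ(ω₁) = -ω_{-1} - a₁ and Φ(ω₀) = ω₀, where Γ_{k,l} = Γ(O, kt, lt) ∈ 𝔽_q. -/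
/-!
Write `λ(P, Q)` (`lineSlope`) for the slope of the line through `P` and `Q`, so that
`ω_k = λ(b, -kt)`, `ω_{-1} = λ(b, t)` and `Γ_{-1,k-1} = λ((k-1)t, t)`. Since `x ↦ x^q` is a ring
endomorphism fixing the coefficients of the curve, a map on points acting on coordinates by it is
additive and acts on slopes by `x ↦ x^q`; it fixes `kt` and sends `b` to `b + t`, so
`Φ(ω_k) = λ(b + t, -kt)`. The claims then follow from two addition-law identities,
`λ(P + Q, -(R + Q)) = λ(P, -R) - λ(P, Q) + λ(R, Q)` (with `P = b`, `Q = t`, `R = (k-1)t`) and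
`λ(P + Q, -Q) = -λ(P, Q) - a₁`, valid for points in general position and checked in coordinates.
General position holds because `b` lies outside the cyclic group generated by `t`, as
`d • b ≠ 0 = d • t`.
-/

noncomputable section
namespace EllipticPeriods

variable {F : Type*} [Field F]

open WeierstrassCurve.Affine
open Classical

def lineSlope {W : WeierstrassCurve.Affine F} (P Q : W.Point) : F :=
  W.slope (xc P) (xc Q) (yc P) (yc Q)

lemma uf_zero_left (W : WeierstrassCurve.Affine F) (B P : W.Point) :
    uf W 0 B P = lineSlope P (-B) := by
  rw [uf, lineSlope, sub_zero, zero_sub]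

section Coordinates

variable {W : WeierstrassCurve.Affine F}

@[simp]
lemma xc_some {x y : F} (h : W.Nonsingular x y) : xc (.some x y h) = x := rfl

@[simp]
lemma yc_some {x y : F} (h : W.Nonsingular x y) : yc (.some x y h) = y := rfl

lemma exists_eq_some {P : W.Point} (hP : P ≠ 0) :
    ∃ x y, ∃ h : W.Nonsingular x y, P = .some x y h := by
  cases P with
  | zero => exact absurd rfl hP
  | some _ _ h => exact ⟨_, _, h, rfl⟩

lemma equation_xc_yc {P : W.Point} (hP : P ≠ 0) : W.Equation (xc P) (yc P) := by
  obtain ⟨x, y, h, rfl⟩ := exists_eq_some hP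
  exact h.1

lemma eq_of_xc_eq_of_yc_eq {P Q : W.Point} (hP : P ≠ 0) (hQ : Q ≠ 0)
    (hx : xc P = xc Q) (hy : yc P = yc Q) : P = Q := by
  obtain ⟨x₁, y₁, h₁, rfl⟩ := exists_eq_some hP
  obtain ⟨x₂, y₂, h₂, rfl⟩ := exists_eq_some hQ
  rw [xc_some, xc_some] at hx
  rw [yc_some, yc_some] at hy
  subst hx hy
  rfl

@[simp]
lemma xc_neg (P : W.Point) : xc (-P) = xc P := by
  rcases P with _ | _ <;> rfl

lemma yc_neg {P : W.Point} (hP : P ≠ 0) : yc (-P) = W.negY (xc P) (yc P) := by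
  obtain ⟨x, y, h, rfl⟩ := exists_eq_some hP
  rfl

lemma xc_ne_xc {P Q : W.Point} (hP : P ≠ 0) (hQ : Q ≠ 0) (h : P ≠ Q) (h' : P ≠ -Q) :
    xc P ≠ xc Q := by
  obtain ⟨x₁, y₁, h₁, rfl⟩ := exists_eq_some hP
  obtain ⟨x₂, y₂, h₂, rfl⟩ := exists_eq_some hQ
  exact fun hx => (Point.X_eq_iff.1 hx).elim h h'

lemma xc_add_and_yc_add {P Q : W.Point} (hP : P ≠ 0) (hQ : Q ≠ 0) (hPQ : P + Q ≠ 0) :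
    xc (P + Q) = W.addX (xc P) (xc Q) (lineSlope P Q) ∧
      yc (P + Q) = W.addY (xc P) (xc Q) (yc P) (lineSlope P Q) := by
  obtain ⟨x₁, y₁, h₁, rfl⟩ := exists_eq_some hP
  obtain ⟨x₂, y₂, h₂, rfl⟩ := exists_eq_some hQ
  rw [Point.add_some fun h => hPQ (Point.add_of_Y_eq h.1 h.2)]
  exact ⟨rfl, rfl⟩

lemma lineSlope_mul_sub {P Q : W.Point} (h : xc P ≠ xc Q) :
    lineSlope P Q * (xc P - xc Q) = yc P - yc Q := by
  rw [lineSlope, slope_of_X_ne h, div_mul_cancel₀ _ (sub_ne_zero.2 h)]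

lemma lineSlope_self_mul {P : W.Point} (hP : P ≠ 0) (h : P ≠ -P) :
    lineSlope P P * (yc P - W.negY (xc P) (yc P)) =
      3 * xc P ^ 2 + 2 * W.a₂ * xc P + W.a₄ - W.a₁ * yc P := by
  have hy : yc P ≠ W.negY (xc P) (yc P) := fun hy =>
    h (eq_of_xc_eq_of_yc_eq hP (neg_ne_zero.2 hP) (xc_neg P).symm (by rw [yc_neg hP, ← hy]))
  rw [lineSlope, slope_of_Y_ne rfl hy, div_mul_cancel₀ _ (sub_ne_zero.2 hy)]

end Coordinates

section SlopeIdentities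

variable {W : WeierstrassCurve.Affine F}

lemma lineSlope_add_neg_add_coords_of_X_ne {X₁ Y₁ X₂ Y₂ X₃ Y₃ L M : F}
    (e₁ : W.Equation X₁ Y₁) (e₂ : W.Equation X₂ Y₂) (e₃ : W.Equation X₃ Y₃)
    (hL : L * (X₁ - X₂) = Y₁ - Y₂) (hM : M * (X₃ - X₂) = Y₃ - Y₂)
    (h₁₂ : X₁ ≠ X₂) (h₃₂ : X₃ ≠ X₂) (h₁₃ : X₁ ≠ X₃)
    (h : W.addX X₁ X₂ L ≠ W.addX X₃ X₂ M) :
    (W.addY X₁ X₂ Y₁ L - W.negY (W.addX X₃ X₂ M) (W.addY X₃ X₂ Y₃ M)) /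
        (W.addX X₁ X₂ L - W.addX X₃ X₂ M) =
      (Y₁ - W.negY X₃ Y₃) / (X₁ - X₃) - L + M := by
  have h₁₃' := sub_ne_zero.2 h₁₃
  rw [div_sub' h₁₃', div_add' _ _ _ h₁₃', div_eq_div_iff (sub_ne_zero.2 h) h₁₃']
  refine mul_left_cancel₀ (mul_ne_zero (sub_ne_zero.2 h₁₂) (sub_ne_zero.2 h₃₂)) ?_
  -- a polynomial identity modulo the three curve equations and the two slope relations
  clear h₁₂ h₃₂ h₁₃ h h₁₃'
  rw [equation_iff] at e₁ e₂ e₃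
  simp only [addY, negAddY, addX, negY]
  grind

lemma lineSlope_add_neg_add_coords_of_tangent {X₁ Y₁ X₂ Y₂ L M : F}
    (e₁ : W.Equation X₁ Y₁) (e₂ : W.Equation X₂ Y₂)
    (hL : L * (X₁ - X₂) = Y₁ - Y₂)
    (hM : M * (Y₂ - W.negY X₂ Y₂) = 3 * X₂ ^ 2 + 2 * W.a₂ * X₂ + W.a₄ - W.a₁ * Y₂)
    (h₁₂ : X₁ ≠ X₂) (h : W.addX X₁ X₂ L ≠ W.addX X₂ X₂ M) :
    (W.addY X₁ X₂ Y₁ L - W.negY (W.addX X₂ X₂ M) (W.addY X₂ X₂ Y₂ M)) /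
        (W.addX X₁ X₂ L - W.addX X₂ X₂ M) =
      (Y₁ - W.negY X₂ Y₂) / (X₁ - X₂) - L + M := by
  have := sub_ne_zero.2 h₁₂
  have := sub_ne_zero.2 h
  simp only [equation_iff, addY, negAddY, addX, negY] at *
  grind

lemma lineSlope_add_neg_coords {X₁ Y₁ X₂ Y₂ L : F} (hL : L * (X₁ - X₂) = Y₁ - Y₂)
    (h : W.addX X₁ X₂ L ≠ X₂) :
    (W.addY X₁ X₂ Y₁ L - W.negY X₂ Y₂) / (W.addX X₁ X₂ L - X₂) = -L - W.a₁ := by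
  rw [div_eq_iff (sub_ne_zero.2 h)]
  simp only [addY, negAddY, addX, negY]
  linear_combination hL

end SlopeIdentities

section PointIdentities

variable {W : WeierstrassCurve.Affine F}

theorem lineSlope_add_neg {P Q : W.Point} (hP : P ≠ 0) (hQ : Q ≠ 0) (hPQ : P ≠ Q) (hPQ' : P ≠ -Q)
    (h : P + Q ≠ -Q) :
    lineSlope (P + Q) (-Q) = -lineSlope P Q - W.a₁ := by
  have hPQ0 : P + Q ≠ 0 := fun h => hPQ' (eq_neg_of_add_eq_zero_left h)
  have hx : xc (P + Q) ≠ xc (-Q) :=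
    xc_ne_xc hPQ0 (neg_ne_zero.2 hQ) h (by rwa [neg_neg, Ne, add_eq_right])
  obtain ⟨hxPQ, hyPQ⟩ := xc_add_and_yc_add hP hQ hPQ0
  rw [lineSlope, slope_of_X_ne hx, yc_neg hQ, xc_neg, hxPQ, hyPQ]
  rw [xc_neg, hxPQ] at hx
  exact lineSlope_add_neg_coords (lineSlope_mul_sub (xc_ne_xc hP hQ hPQ hPQ')) hx

theorem lineSlope_add_neg_add {P Q R : W.Point} (hP : P ≠ 0) (hQ : Q ≠ 0) (hR : R ≠ 0)
    (hPQ : P ≠ Q) (hPQ' : P ≠ -Q) (hPR : P ≠ R) (hPR' : P ≠ -R) (hRQ' : R ≠ -Q)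
    (h : P + Q ≠ -(R + Q)) :
    lineSlope (P + Q) (-(R + Q)) = lineSlope P (-R) - lineSlope P Q + lineSlope R Q := by
  have hPQ0 : P + Q ≠ 0 := fun h => hPQ' (eq_neg_of_add_eq_zero_left h)
  have hRQ0 : R + Q ≠ 0 := fun h => hRQ' (eq_neg_of_add_eq_zero_left h)
  have hx₁₂ := xc_ne_xc hP hQ hPQ hPQ'
  have hx₁₃ : xc P ≠ xc (-R) := by
    rw [xc_neg]; exact xc_ne_xc hP hR hPR hPR'
  have hx : xc (P + Q) ≠ xc (-(R + Q)) :=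
    xc_ne_xc hPQ0 (neg_ne_zero.2 hRQ0) h (by rwa [neg_neg, Ne, add_left_inj])
  obtain ⟨hxPQ, hyPQ⟩ := xc_add_and_yc_add hP hQ hPQ0
  obtain ⟨hxRQ, hyRQ⟩ := xc_add_and_yc_add hR hQ hRQ0
  rw [lineSlope, slope_of_X_ne hx, lineSlope, slope_of_X_ne hx₁₃, yc_neg hR, yc_neg hRQ0,
    xc_neg, xc_neg, hxPQ, hyPQ, hxRQ, hyRQ]
  rw [xc_neg, hxPQ, hxRQ] at hx
  rw [xc_neg] at hx₁₃
  have hL := lineSlope_mul_sub hx₁₂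
  by_cases hRQ : R = Q
  · subst hRQ
    exact lineSlope_add_neg_add_coords_of_tangent (equation_xc_yc hP) (equation_xc_yc hR) hL
      (lineSlope_self_mul hR hRQ') hx₁₂ hx
  · have hx₃₂ := xc_ne_xc hR hQ hRQ hRQ'
    exact lineSlope_add_neg_add_coords_of_X_ne (equation_xc_yc hP) (equation_xc_yc hQ)
      (equation_xc_yc hR) hL (lineSlope_mul_sub hx₃₂) hx₁₂ hx₃₂ hx₁₃ hx

theorem lineSlope_add_neg_of_notMem_zmultiples {P Q : W.Point}
    (hP : P ∉ AddSubgroup.zmultiples Q) (hQ : Q ≠ 0) :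
    lineSlope (P + Q) (-Q) = -lineSlope P Q - W.a₁ := by
  have hQmem := AddSubgroup.mem_zmultiples Q
  refine lineSlope_add_neg (fun h => hP (h ▸ zero_mem _)) hQ (fun h => hP (h ▸ hQmem))
    (fun h => hP (h ▸ neg_mem hQmem)) fun h => hP ?_
  rw [eq_sub_of_add_eq h]
  exact sub_mem (neg_mem hQmem) hQmem

theorem lineSlope_add_neg_add_of_notMem_zmultiples {P Q R : W.Point}
    (hP : P ∉ AddSubgroup.zmultiples Q) (hQ : Q ≠ 0) (hR : R ∈ AddSubgroup.zmultiples Q)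
    (hR0 : R ≠ 0) (hRQ : R + Q ≠ 0) :
    lineSlope (P + Q) (-(R + Q)) = lineSlope P (-R) - lineSlope P Q + lineSlope R Q := by
  have hQmem := AddSubgroup.mem_zmultiples Q
  refine lineSlope_add_neg_add (fun h => hP (h ▸ zero_mem _)) hQ hR0 (fun h => hP (h ▸ hQmem))
    (fun h => hP (h ▸ neg_mem hQmem)) (fun h => hP (h ▸ hR)) (fun h => hP (h ▸ neg_mem hR))
    (fun h => hRQ (by rw [h, neg_add_cancel])) fun h => hP ?_
  rw [eq_sub_of_add_eq h]
  exact sub_mem (neg_mem (add_mem hR hQmem)) hQmem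

end PointIdentities

section Endomorphism

variable {W : WeierstrassCurve.Affine F} {f : F →+* F} {φ : W.Point → W.Point}

lemma lineSlope_map_of_coords (hWf : W.map f = W) (hx : ∀ P, xc (φ P) = f (xc P))
    (hy : ∀ P, yc (φ P) = f (yc P)) (P Q : W.Point) :
    lineSlope (φ P) (φ Q) = f (lineSlope P Q) := by
  rw [lineSlope, lineSlope, hx, hx, hy, hy, ← W.map_slope, hWf]

lemma map_add_of_coords (hWf : W.map f = W) (hx : ∀ P, xc (φ P) = f (xc P))
    (hy : ∀ P, yc (φ P) = f (yc P)) (h0 : ∀ P, φ P = 0 ↔ P = 0) (P Q : W.Point) :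
    φ (P + Q) = φ P + φ Q := by
  have hns {x y : F} (h : W.Nonsingular x y) : W.Nonsingular (f x) (f y) := by
    simpa only [hWf] using (W.map_nonsingular f.injective x y).2 h
  have hsome {x y : F} (h : W.Nonsingular x y) : φ (.some x y h) = .some (f x) (f y) (hns h) :=
    eq_of_xc_eq_of_yc_eq ((h0 _).not.2 (Point.some_ne_zero h)) (Point.some_ne_zero _) (hx _) (hy _)
  have hnegY (x y : F) : W.negY (f x) (f y) = f (W.negY x y) := by
    simpa only [hWf] using W.map_negY f x y
  have hφ0 : φ 0 = 0 := (h0 0).2 rfl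
  rcases P with _ | ⟨x₁, y₁, h₁⟩
  · rw [← Point.zero_def, zero_add, hφ0, zero_add]
  rcases Q with _ | ⟨x₂, y₂, h₂⟩
  · rw [← Point.zero_def, add_zero, hφ0, add_zero]
  by_cases hxy : x₁ = x₂ ∧ y₁ = W.negY x₂ y₂
  · rw [Point.add_of_Y_eq hxy.1 hxy.2, hsome, hsome,
      Point.add_of_Y_eq (congrArg f hxy.1) (by rw [hxy.2, hnegY]), hφ0]
  · have hxy' : ¬(f x₁ = f x₂ ∧ f y₁ = W.negY (f x₂) (f y₂)) := by
      rwa [hnegY, f.injective.eq_iff, f.injective.eq_iff]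
    have hslope : W.slope (f x₁) (f x₂) (f y₁) (f y₂) = f (W.slope x₁ x₂ y₁ y₂) := by
      simpa only [hWf] using W.map_slope f x₁ x₂ y₁ y₂
    rw [Point.add_some hxy, hsome, hsome, hsome, Point.add_some hxy', Point.some.injEq, hslope]
    constructor
    · simpa only [hWf] using (W.map_addX f ..).symm
    · simpa only [hWf] using (W.map_addY f ..).symm

end Endomorphism

section Cyclic

variable {G : Type*} {d : ℕ}

lemma one_val_nsmul [AddMonoid G] {t : G} (ht : addOrderOf t = d) :
    (1 : ZMod d).val • t = t := by
  rw [ZMod.val_one_eq_one_mod, ← ht, mod_addOrderOf_nsmul, one_nsmul]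

lemma val_add_nsmul [AddMonoid G] {t : G} [NeZero d] (ht : addOrderOf t = d) (i j : ZMod d) :
    (i + j).val • t = i.val • t + j.val • t := by
  have h := mod_addOrderOf_nsmul t (i.val + j.val)
  rwa [ht, ← ZMod.val_add, add_nsmul] at h

lemma val_nsmul_eq_zero_iff [AddMonoid G] {t : G} [NeZero d] (ht : addOrderOf t = d)
    (j : ZMod d) : j.val • t = 0 ↔ j = 0 := by
  rw [← addOrderOf_dvd_iff_nsmul_eq_zero, ht, ← ZMod.natCast_eq_zero_iff, ZMod.natCast_zmod_val]

lemma neg_one_val_nsmul [AddGroup G] {t : G} [NeZero d] (ht : addOrderOf t = d) :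
    (-1 : ZMod d).val • t = -t := by
  have h := val_add_nsmul ht (-1) 1
  rw [neg_add_cancel, ZMod.val_zero, zero_nsmul, one_val_nsmul ht] at h
  exact eq_neg_of_add_eq_zero_left h.symm

lemma notMem_zmultiples_of_nsmul_ne_zero [AddGroup G] {t b : G} (ht : addOrderOf t = d)
    (hb : d • b ≠ 0) : b ∉ AddSubgroup.zmultiples t := by
  rintro ⟨n, rfl⟩
  rw [← natCast_zsmul, zsmul_comm, natCast_zsmul, ← ht, addOrderOf_nsmul_eq_zero,
    zsmul_zero] at hb
  exact hb rfl

end Cyclic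

open Classical in
theorem frobenius_on_omega_general {K L : Type*} [Field K] [Fintype K] [Field L] [Algebra K L]
    (d : ℕ) (hd : 2 ≤ d)
    (W : WeierstrassCurve.Affine L)
    (hW : W.a₁ ^ Fintype.card K = W.a₁ ∧ W.a₂ ^ Fintype.card K = W.a₂ ∧
      W.a₃ ^ Fintype.card K = W.a₃ ∧ W.a₄ ^ Fintype.card K = W.a₄ ∧
      W.a₆ ^ Fintype.card K = W.a₆)
    (φ : W.Point → W.Point)
    (hφ : ∀ P : W.Point, xc (φ P) = xc P ^ Fintype.card K ∧
      yc (φ P) = yc P ^ Fintype.card K ∧ (φ P = 0 ↔ P = 0))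
    (t : W.Point) (ht : addOrderOf t = d) (htK : φ t = t)
    (b : W.Point) (hb : φ b = b + t) (hbd : d • b ≠ 0)
    (ω : ZMod d → L)
    (hω : ∀ k : ZMod d, ω k = if k = 0 then 1 else uf W 0 (k.val • t) b) :
    (∀ k : ZMod d, k ≠ 0 → k ≠ 1 →
        ω k ^ Fintype.card K =
          ω (k - 1) - ω (-1) + Gam W 0 ((-1 : ZMod d).val • t) ((k - 1).val • t)) ∧
      ω 1 ^ Fintype.card K = -ω (-1) - W.a₁ ∧
      ω 0 ^ Fintype.card K = ω 0 := by
  have : Fact (1 < d) := ⟨hd⟩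
  obtain ⟨h₁, h₂, h₃, h₄, h₆⟩ := hW
  let f : L →+* L := FiniteField.frobeniusAlgHom K L
  have hWf : W.map f = W := by ext <;> assumption
  have hx (P : W.Point) : xc (φ P) = f (xc P) := (hφ P).1
  have hy (P : W.Point) : yc (φ P) = f (yc P) := (hφ P).2.1
  let Φ : W.Point →+ W.Point := .mk' φ (map_add_of_coords hWf hx hy fun P => (hφ P).2.2)
  have hφ_neg_nsmul (n : ℕ) : φ (-(n • t)) = -(n • t) := by
    change Φ _ = _
    rw [map_neg, map_nsmul]
    exact congrArg (-(n • ·)) htK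
  have ht0 : t ≠ 0 := by
    rintro rfl
    rw [addOrderOf_zero] at ht
    omega
  have hb_notMem := notMem_zmultiples_of_nsmul_ne_zero ht hbd
  have hω_slope (k : ZMod d) (hk : k ≠ 0) : ω k = lineSlope b (-(k.val • t)) := by
    rw [hω, if_neg hk, uf_zero_left]
  have hω_frob (k : ZMod d) (hk : k ≠ 0) :
      ω k ^ Fintype.card K = lineSlope (b + t) (-(k.val • t)) := by
    have h := lineSlope_map_of_coords hWf hx hy b (-(k.val • t))
    rw [hb, hφ_neg_nsmul] at h
    rw [hω_slope k hk, h]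
    rfl
  have hneg_one : (-1 : ZMod d) ≠ 0 := neg_ne_zero.2 one_ne_zero
  refine ⟨fun k hk0 hk1 => ?_, ?_, by rw [hω 0, if_pos rfl, one_pow]⟩
  · have hk := val_add_nsmul ht (k - 1) 1
    rw [sub_add_cancel, one_val_nsmul ht] at hk
    rw [hω_frob k hk0, hω_slope _ (sub_ne_zero.2 hk1), hω_slope _ hneg_one, Gam, uf_zero_left,
      neg_one_val_nsmul ht, neg_neg, hk]
    exact lineSlope_add_neg_add_of_notMem_zmultiples hb_notMem ht0
      (nsmul_mem (AddSubgroup.mem_zmultiples t) _)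
      ((val_nsmul_eq_zero_iff ht _).not.2 (sub_ne_zero.2 hk1))
      (hk ▸ (val_nsmul_eq_zero_iff ht k).not.2 hk0)
  · rw [hω_frob 1 one_ne_zero, hω_slope _ hneg_one, one_val_nsmul ht, neg_one_val_nsmul ht,
      neg_neg]
    exact lineSlope_add_neg_of_notMem_zmultiples hb_notMem ht0

open Classical in
/-- action of the `q`-Frobenius `Φ : x ↦ x^q` on the elliptic basis:
`Φ(ω_k) = ω_{k-1} - ω_{-1} + Γ_{-1,k-1}` for `k ≢ 0, 1`, `Φ(ω₁) = -ω_{-1} - a₁`, and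
`Φ(ω₀) = ω₀`, where `Γ_{k,l} = Γ(O, kt, lt)`. -/
theorem frobenius_on_omega {K L : Type*} [Field K] [Fintype K] [Field L] [Algebra K L]
    (d : ℕ) (hd : 2 ≤ d) (hrank : Module.finrank K L = d)
    (W : WeierstrassCurve.Affine L)
    (hW : W.a₁ ^ Fintype.card K = W.a₁ ∧ W.a₂ ^ Fintype.card K = W.a₂ ∧
      W.a₃ ^ Fintype.card K = W.a₃ ∧ W.a₄ ^ Fintype.card K = W.a₄ ∧
      W.a₆ ^ Fintype.card K = W.a₆)
    (φ : W.Point → W.Point)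
    (hφ : ∀ P : W.Point, xc (φ P) = xc P ^ Fintype.card K ∧
      yc (φ P) = yc P ^ Fintype.card K ∧ (φ P = 0 ↔ P = 0))
    (t : W.Point) (ht : addOrderOf t = d) (htK : φ t = t)
    (b : W.Point) (hb : φ b = b + t) (hbd : d • b ≠ 0)
    (ω : ZMod d → L)
    (hω : ∀ k : ZMod d, ω k = if k = 0 then 1 else uf W 0 (k.val • t) b) :
    (∀ k : ZMod d, k ≠ 0 → k ≠ 1 →
        ω k ^ Fintype.card K =
          ω (k - 1) - ω (-1) + Gam W 0 ((-1 : ZMod d).val • t) ((k - 1).val • t)) ∧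
      ω 1 ^ Fintype.card K = -ω (-1) - W.a₁ ∧
      ω 0 ^ Fintype.card K = ω 0 :=
  frobenius_on_omega_general d hd W hW φ hφ t ht htK b hb hbd ω hω

end EllipticPeriods
end
end
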